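/- Let Z, G be compact abelian groups, β ∈ Z and α ∈ G topological generators, π: Z → G a continuous surjection with π(z + β) = π(z) + α. If some fibre of π is finite with cardinality r, then ker(f) is finite of order r and Z/ker(f) is topologically isomorphic to G, where f(z) = π(z) − π(0). -/

import Mathlib

/-!
Equivariance `π (z + β) = π z + α` propagates to `π (z + n • β) = π z + n • α` for all `n : ℤ`,
so the two continuous maps `w ↦ π (z + w) + π 0` and `w ↦ π z + π w` agree on the dense set
`ℤ • β` and hence everywhere. Thus `f = π - π 0` is a continuous surjective homomorphism, every
fibre of `π` is a coset of `ker f`, and a continuous bijection from the compact group `Z ⧸ ker f`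
onto the Hausdorff group `G` is a homeomorphism.
-/

open Set

section Equivariant

variable {Z G : Type*} [AddGroup Z] [AddGroup G] {π : Z → G} {β : Z} {α : G}

theorem map_add_nsmul_of_map_add (hequi : ∀ z, π (z + β) = π z + α) (n : ℕ) (z : Z) :
    π (z + n • β) = π z + n • α := by
  induction n with
  | zero => simp
  | succ n ih => rw [succ_nsmul, ← add_assoc, hequi, ih, succ_nsmul, add_assoc]

theorem map_add_zsmul_of_map_add (hequi : ∀ z, π (z + β) = π z + α) (n : ℤ) (z : Z) :
    π (z + n • β) = π z + n • α := by
  obtain ⟨n, rfl | rfl⟩ := n.eq_nat_or_neg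
  · simpa only [natCast_zsmul] using map_add_nsmul_of_map_add hequi n z
  · have h := map_add_nsmul_of_map_add hequi n (z + -(n • β))
    rw [neg_add_cancel_right] at h
    rw [neg_zsmul, natCast_zsmul, neg_zsmul, natCast_zsmul, h, add_neg_cancel_right]

end Equivariant

section Dense

variable {Z G : Type*} [AddGroup Z] [TopologicalSpace Z] [ContinuousAdd Z]
  [AddCommGroup G] [TopologicalSpace G] [ContinuousAdd G] [T2Space G]
  {π : Z → G} {β : Z} {α : G}

theorem map_add_add_map_zero_of_denseRange (hβ : Dense (range fun n : ℤ => n • β))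
    (hπ : Continuous π) (hequi : ∀ z, π (z + β) = π z + α) (z w : Z) :
    π (z + w) + π 0 = π z + π w := by
  have h_eqOn : EqOn (fun w => π (z + w) + π 0) (fun w => π z + π w) (range fun n : ℤ => n • β) := by
    rintro _ ⟨n, rfl⟩
    have h₀ := map_add_zsmul_of_map_add hequi n 0
    rw [zero_add] at h₀
    simp only [map_add_zsmul_of_map_add hequi n z, h₀]
    abel
  exact congrFun (Continuous.ext_on hβ (by fun_prop) (by fun_prop) h_eqOn) w

end Dense

namespace AddMonoidHom

variable {Z G : Type*} [AddGroup Z] [AddCommGroup G] {π : Z → G}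

def linearPart (π : Z → G) (h : ∀ z w, π (z + w) + π 0 = π z + π w) : Z →+ G :=
  AddMonoidHom.mk' (fun z => π z - π 0) fun z w => by
    rw [eq_sub_of_add_eq (h z w)]
    abel

variable (h : ∀ z w, π (z + w) + π 0 = π z + π w)

@[simp]
theorem linearPart_apply (z : Z) : linearPart π h z = π z - π 0 := rfl

theorem preimage_linearPart (y : G) : linearPart π h ⁻¹' {y} = π ⁻¹' {y + π 0} := by
  ext z
  simp [sub_eq_iff_eq_add]

theorem linearPart_surjective (hπ : Function.Surjective π) :
    Function.Surjective (linearPart π h) := fun y =>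
  (hπ (y + π 0)).imp fun _ hz => by simp [hz]

end AddMonoidHom

noncomputable def ContinuousAddEquiv.quotientKerOfCompactOfT2 {Z G : Type*} [AddGroup Z]
    [TopologicalSpace Z] [CompactSpace Z] [AddGroup G] [TopologicalSpace G] [T2Space G]
    (f : Z →+ G) (hf : Continuous f) (hs : Function.Surjective f) : Z ⧸ f.ker ≃ₜ+ G where
  toAddEquiv := QuotientAddGroup.quotientKerEquivOfSurjective f hs
  __ := Continuous.homeoOfEquivCompactToT2
    (f := (QuotientAddGroup.quotientKerEquivOfSurjective f hs).toEquiv)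
    ((QuotientAddGroup.isQuotientMap_mk f.ker).continuous_iff.mpr hf)

theorem stmt_4_general {Z G : Type} [AddCommGroup Z] [TopologicalSpace Z]
    [IsTopologicalAddGroup Z] [CompactSpace Z]
    [AddCommGroup G] [TopologicalSpace G] [IsTopologicalAddGroup G]
    [T2Space G]
    (β : Z) (hβ : Dense (Set.range fun n : ℤ => n • β))
    (α : G)
    (π : Z → G) (hcont : Continuous π) (hsurj : Function.Surjective π)
    (hequi : ∀ g : Z, π (g + β) = π g + α)
    (g : G) (hfin : (π ⁻¹' {g}).Finite) (r : ℕ)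
    (hr : Nat.card (π ⁻¹' {g}) = r) :
    ∃ K : AddSubgroup Z, (K : Set Z) = {z : Z | π z - π 0 = 0} ∧
      (K : Set Z).Finite ∧ Nat.card K = r ∧
      ∃ e : (Z ⧸ K) ≃+ G, Continuous e ∧ Continuous e.symm := by
  set f := AddMonoidHom.linearPart π (map_add_add_map_zero_of_denseRange hβ hcont hequi)
  have hf_surj : Function.Surjective f := AddMonoidHom.linearPart_surjective _ hsurj
  have fibre_equiv_ker : π ⁻¹' {g} ≃ f.ker := by
    rw [← sub_add_cancel g (π 0), ← AddMonoidHom.preimage_linearPart]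
    exact AddMonoidHom.fiberEquivKerOfSurjective hf_surj _
  let e := ContinuousAddEquiv.quotientKerOfCompactOfT2 f (hcont.sub continuous_const) hf_surj
  refine ⟨f.ker, by ext; simp [f], ?_, ?_, e.toAddEquiv, e.continuous, e.symm.continuous⟩
  · have := fibre_equiv_ker.finite_iff.mp hfin.to_subtype
    exact Set.toFinite _
  · rw [← hr, Nat.card_congr fibre_equiv_ker]

/-- Under the same hypotheses, if some fibre of `π` is finite of
cardinality `r`, then the kernel of `f z = π z - π 0` is finite of order `r`
and `Z / ker f` is topologically isomorphic to `G`. -/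
theorem stmt_4 {Z G : Type} [AddCommGroup Z] [TopologicalSpace Z]
    [IsTopologicalAddGroup Z] [CompactSpace Z] [T2Space Z]
    [AddCommGroup G] [TopologicalSpace G] [IsTopologicalAddGroup G]
    [CompactSpace G] [T2Space G]
    (β : Z) (hβ : Dense (Set.range fun n : ℤ => n • β))
    (α : G) (hα : Dense (Set.range fun n : ℤ => n • α))
    (π : Z → G) (hcont : Continuous π) (hsurj : Function.Surjective π)
    (hequi : ∀ g : Z, π (g + β) = π g + α)
    (g : G) (hfin : (π ⁻¹' {g}).Finite) (r : ℕ)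
    (hr : Nat.card (π ⁻¹' {g}) = r) :
    ∃ K : AddSubgroup Z, (K : Set Z) = {z : Z | π z - π 0 = 0} ∧
      (K : Set Z).Finite ∧ Nat.card K = r ∧
      ∃ e : (Z ⧸ K) ≃+ G, Continuous e ∧ Continuous e.symm :=
  stmt_4_general β hβ α π hcont hsurj hequi g hfin r hr
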